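/- Let K₁ and K₂ be fractal segments of order n with digit sets D₁ and D₂. For a ∈ {−1,0,1} set F_a = K₁ ∩ (K₂ + a) and G_a = D₁ ∩ (D₂ − a). If G₀ has exactly one element and (F₁ + G₁) ∪ (F_{−1} + G_{−1}) ≠ ∅, then F₀ = K₁ ∩ K₂ is countably infinite. -/

import Mathlib

open Set Pointwise

noncomputable section

/-- `K` is a fractal segment of order `n` with (nonempty) digit set `D ⊆ {0,…,n-1}`:
a nonempty compact set with `K = (K + D)/n`. -/
def IsFractalSegment (n : ℕ) (D : Set ℤ) (K : Set ℝ) : Prop :=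
  2 ≤ n ∧ D.Nonempty ∧ D ⊆ Set.Icc 0 ((n : ℤ) - 1) ∧
  K.Nonempty ∧ IsCompact K ∧
  K = ⋃ d ∈ D, (fun x => (x + (d : ℝ)) / n) '' K

/-- `F_a = K₁ ∩ (K₂ + a)`. -/
def segF (K₁ K₂ : Set ℝ) (a : ℤ) : Set ℝ := K₁ ∩ ((· + (a : ℝ)) '' K₂)

/-- `G_a = D₁ ∩ (D₂ - a)`. -/
def segG (D₁ D₂ : Set ℤ) (a : ℤ) : Set ℤ := D₁ ∩ ((· - a) '' D₂)

/-!
Let `d₀` be the unique common digit and `φ x = (x + d₀)/n`, a contraction with fixed point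
`p = d₀/(n-1)`. If `x ∈ K₁ ∩ K₂` is written as `(y₁ + e₁)/n = (y₂ + e₂)/n` with `yᵢ ∈ Kᵢ ⊆ [0,1]`,
then either `e₁ = e₂ = d₀` and `x = φ y` with `y ∈ K₁ ∩ K₂`, or `e₁ ≠ e₂`, which forces
`{y₁, y₂} = {0, 1}` and `x ∈ ℤ/n`. Iterating, `K₁ ∩ K₂ ⊆ {p} ∪ ⋃ₖ φᵏ(ℤ/n)`, a countable set.
The hypothesis on `F_{±1} + G_{±1}` produces a point `m/n` of `K₁ ∩ K₂` with `0 < m < n`;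
it is not `p`, so its `φ`-orbit is infinite and stays in `K₁ ∩ K₂`.
-/

theorem subset_iInter_image_iterate_union_iUnion {α : Type*} {f : α → α} {A S : Set α} (h : A ⊆ f '' A ∪ S) :
    A ⊆ (⋂ k, f^[k] '' A) ∪ ⋃ k, f^[k] '' S := by
  intro x hx
  by_contra hxA
  simp only [mem_union, mem_iUnion, not_or, not_exists] at hxA
  obtain ⟨hnotA, hnotS⟩ := hxA
  refine hnotA (mem_iInter.2 fun k => ?_)
  induction k with
  | zero => exact ⟨x, hx, rfl⟩
  | succ k ih =>
    obtain ⟨y, hyA, rfl⟩ := ih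
    rcases h hyA with ⟨z, hzA, rfl⟩ | hyS
    · exact ⟨z, hzA, Function.iterate_succ_apply f k z⟩
    · exact (hnotS k ⟨y, hyS, rfl⟩).elim

theorem iterate_sub_eq_pow_mul {R : Type*} [Ring R] {f : R → R} {p c : R}
    (hf : ∀ t, f t - p = c * (t - p)) (k : ℕ) (t : R) :
    f^[k] t - p = c ^ k * (t - p) := by
  induction k with
  | zero => simp
  | succ k ih => rw [Function.iterate_succ_apply', hf, ih, pow_succ', mul_assoc]

section Contraction

variable {f : ℝ → ℝ} {p c : ℝ}

theorem iInter_image_iterate_subset_singleton (hf : ∀ t, f t - p = c * (t - p)) (hc : |c| < 1)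
    {A : Set ℝ} (hA : Bornology.IsBounded A) : ⋂ k, f^[k] '' A ⊆ {p} := by
  intro x hx
  obtain ⟨r, hr⟩ := hA.subset_closedBall p
  have hbound : ∀ k : ℕ, |x - p| ≤ |c| ^ k * r := fun k => by
    obtain ⟨y, hyA, rfl⟩ := mem_iInter.1 hx k
    rw [iterate_sub_eq_pow_mul hf, abs_mul, abs_pow]
    exact mul_le_mul_of_nonneg_left (hr hyA) (by positivity)
  have hlim : Filter.Tendsto (fun k : ℕ => |c| ^ k * r) Filter.atTop (nhds 0) := by
    simpa using (tendsto_pow_atTop_nhds_zero_of_lt_one (abs_nonneg c) hc).mul_const r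
  have : |x - p| ≤ 0 := ge_of_tendsto' hlim hbound
  exact sub_eq_zero.1 (abs_nonpos_iff.1 this)

theorem injective_iterate_apply (hf : ∀ t, f t - p = c * (t - p)) (hc0 : c ≠ 0) (hc1 : |c| ≠ 1)
    {q : ℝ} (hq : q ≠ p) : Function.Injective fun k : ℕ => f^[k] q := by
  intro j k hjk
  have hpow : c ^ j = c ^ k := by
    have := congrArg (· - p) hjk
    simp only [iterate_sub_eq_pow_mul hf] at this
    exact mul_right_cancel₀ (sub_ne_zero.2 hq) this
  apply pow_right_injective₀ (abs_pos.2 hc0) hc1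
  simp only [← abs_pow, hpow]

end Contraction

namespace IsFractalSegment

variable {n : ℕ} {D D₁ D₂ : Set ℤ} {K K₁ K₂ : Set ℝ}

theorem mem_iff (h : IsFractalSegment n D K) {x : ℝ} :
    x ∈ K ↔ ∃ d ∈ D, ∃ y ∈ K, (y + d) / n = x := by
  conv_lhs => rw [h.2.2.2.2.2]
  simp

theorem div_mem (h : IsFractalSegment n D K) {d : ℤ} (hd : d ∈ D) {y : ℝ} (hy : y ∈ K) :
    (y + d) / n ∈ K :=
  h.mem_iff.2 ⟨d, hd, y, hy, rfl⟩

theorem subset_Icc (h : IsFractalSegment n D K) : K ⊆ Icc 0 1 := by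
  obtain ⟨hn, -, hD, hKne, hKc, -⟩ := id h
  have hn' : (2 : ℝ) ≤ n := by exact_mod_cast hn
  have hdigit : ∀ d ∈ D, (0 : ℝ) ≤ d ∧ (d : ℝ) ≤ n - 1 := fun d hd => by
    obtain ⟨h0, h1⟩ := hD hd
    exact ⟨by exact_mod_cast h0, by exact_mod_cast h1⟩
  obtain ⟨M, hMK, hM⟩ := hKc.exists_isGreatest hKne
  obtain ⟨m, hmK, hm⟩ := hKc.exists_isLeast hKne
  obtain ⟨d, hd, y, hy, hyM⟩ := h.mem_iff.1 hMK
  obtain ⟨e, he, z, hz, hzm⟩ := h.mem_iff.1 hmK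
  rw [div_eq_iff (by positivity)] at hyM hzm
  have hM1 : M ≤ 1 := by nlinarith [hM hy, hdigit d hd]
  have hm0 : 0 ≤ m := by nlinarith [hm hz, hdigit e he]
  exact fun x hx => ⟨hm0.trans (hm hx), (hM hx).trans hM1⟩

theorem inter_subset_image_union_range (h₁ : IsFractalSegment n D₁ K₁)
    (h₂ : IsFractalSegment n D₂ K₂) {d₀ : ℤ} (hD : D₁ ∩ D₂ ⊆ {d₀}) :
    K₁ ∩ K₂ ⊆ (fun x => (x + d₀) / n) '' (K₁ ∩ K₂) ∪ range fun m : ℤ => (m : ℝ) / n := by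
  rintro x ⟨hx₁, hx₂⟩
  obtain ⟨e₁, he₁, y₁, hy₁, rfl⟩ := h₁.mem_iff.1 hx₁
  obtain ⟨e₂, he₂, y₂, hy₂, hx⟩ := h₂.mem_iff.1 hx₂
  have hn : (n : ℝ) ≠ 0 := by have := h₁.1; positivity
  have hsum : y₂ + e₂ = y₁ + e₁ := by rwa [div_left_inj' hn] at hx
  obtain ⟨hy₁0, hy₁1⟩ := h₁.subset_Icc hy₁
  obtain ⟨hy₂0, hy₂1⟩ := h₂.subset_Icc hy₂
  rcases lt_trichotomy e₁ e₂ with hlt | rfl | hgt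
  · have : (e₁ : ℝ) + 1 ≤ e₂ := by exact_mod_cast hlt
    refine Or.inr ⟨e₁ + 1, ?_⟩
    have hy₁ : y₁ = 1 := by linarith
    simp [hy₁, add_comm]
  · obtain rfl : e₁ = d₀ := hD ⟨he₁, he₂⟩
    obtain rfl : y₂ = y₁ := by linarith
    exact Or.inl ⟨y₂, ⟨hy₁, hy₂⟩, rfl⟩
  · have : (e₂ : ℝ) + 1 ≤ e₁ := by exact_mod_cast hgt
    refine Or.inr ⟨e₁, ?_⟩
    have hy₁ : y₁ = 0 := by linarith
    simp [hy₁]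

theorem add_div_mem_inter (h₁ : IsFractalSegment n D₁ K₁) (h₂ : IsFractalSegment n D₂ K₂)
    {a : ℤ} {u : ℝ} (hu : u ∈ segF K₁ K₂ a) {g : ℤ} (hg : g ∈ segG D₁ D₂ a) :
    (u + g) / n ∈ K₁ ∩ K₂ := by
  obtain ⟨hu₁, w, hw₂, rfl⟩ := hu
  obtain ⟨hg₁, d, hd₂, rfl⟩ := hg
  refine ⟨h₁.div_mem hg₁ hu₁, ?_⟩
  convert h₂.div_mem hd₂ hw₂ using 2
  push_cast
  ring

-- As `K₁, K₂ ⊆ [0,1]`, `F_1 ⊆ {1}` and `F_{-1} ⊆ {0}`, so `F_a + G_a` consists of integers.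
theorem exists_int_div_mem_inter (h₁ : IsFractalSegment n D₁ K₁)
    (h₂ : IsFractalSegment n D₂ K₂) {a : ℤ} (ha : a = 1 ∨ a = -1) {x : ℝ}
    (hx : x ∈ segF K₁ K₂ a + (fun g : ℤ => (g : ℝ)) '' segG D₁ D₂ a) :
    ∃ m : ℤ, 0 < m ∧ m < n ∧ (m : ℝ) / n ∈ K₁ ∩ K₂ := by
  obtain ⟨u, hu, -, ⟨g, hg, rfl⟩, -⟩ := hx
  have hmem := h₁.add_div_mem_inter h₂ hu hg
  obtain ⟨hu₁, w, hw₂, hwu⟩ := hu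
  obtain ⟨hg₁, d, hd₂, hdg⟩ := hg
  obtain ⟨hu0, hu1⟩ := h₁.subset_Icc hu₁
  obtain ⟨hw0, hw1⟩ := h₂.subset_Icc hw₂
  obtain ⟨hg0, hgn⟩ := h₁.2.2.1 hg₁
  obtain ⟨hd0, hdn⟩ := h₂.2.2.1 hd₂
  simp only at hwu hdg
  rcases ha with rfl | rfl
  · obtain rfl : u = 1 := by push_cast at hwu; linarith
    exact ⟨1 + g, by omega, by omega, by simpa using hmem⟩
  · obtain rfl : u = 0 := by push_cast at hwu; linarith
    exact ⟨g, by omega, by omega, by simpa using hmem⟩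

end IsFractalSegment

theorem int_div_ne_div_sub_one {n : ℕ} {m : ℤ} (hm0 : 0 < m) (hmn : m < n) (d : ℤ) :
    (m : ℝ) / n ≠ d / (n - 1) := by
  have hn : (1 : ℝ) < n := by exact_mod_cast (show (1 : ℤ) < n by omega)
  rw [Ne, div_eq_div_iff (by positivity) (by linarith)]
  intro h
  have hZ : m * ((n : ℤ) - 1) = d * n := by exact_mod_cast h
  have hdvd : (n : ℤ) ∣ m := ⟨m - d, by linear_combination -hZ⟩
  exact absurd (Int.le_of_dvd hm0 hdvd) (by omega)

/-- If `G₀` is a singleton and `(F₁ + G₁) ∪ (F₋₁ + G₋₁) ≠ ∅`,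
then `F₀ = K₁ ∩ K₂` is countably infinite. -/
theorem fractalSegment_countably_infinite
    (n : ℕ) (D₁ D₂ : Set ℤ) (K₁ K₂ : Set ℝ)
    (h1 : IsFractalSegment n D₁ K₁) (h2 : IsFractalSegment n D₂ K₂)
    (hG0 : ∃ d₀ : ℤ, segG D₁ D₂ 0 = {d₀})
    (hne : ((segF K₁ K₂ 1 + (fun g : ℤ => (g : ℝ)) '' segG D₁ D₂ 1) ∪
      (segF K₁ K₂ (-1) + (fun g : ℤ => (g : ℝ)) '' segG D₁ D₂ (-1))).Nonempty) :
    (K₁ ∩ K₂).Countable ∧ (K₁ ∩ K₂).Infinite := by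
  obtain ⟨d₀, hd₀⟩ := hG0
  have hD : D₁ ∩ D₂ = {d₀} := by simpa [segG] using hd₀
  have hd₀D : d₀ ∈ D₁ ∩ D₂ := hD ▸ rfl
  have hn : (2 : ℝ) ≤ n := by exact_mod_cast h1.1
  set φ : ℝ → ℝ := fun x => (x + d₀) / n
  set p : ℝ := d₀ / (n - 1)
  have hφ : ∀ t, φ t - p = (n : ℝ)⁻¹ * (t - p) := fun t => by
    simp only [φ, p]
    field_simp [show (n : ℝ) - 1 ≠ 0 by linarith]
    ring
  have hc : |(n : ℝ)⁻¹| < 1 := by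
    rw [abs_inv, abs_of_pos (by positivity)]
    exact inv_lt_one_of_one_lt₀ (by linarith)
  obtain ⟨m, hm0, hmn, hm⟩ : ∃ m : ℤ, 0 < m ∧ m < n ∧ (m : ℝ) / n ∈ K₁ ∩ K₂ := by
    obtain ⟨x, hx | hx⟩ := hne
    exacts [h1.exists_int_div_mem_inter h2 (Or.inl rfl) hx,
      h1.exists_int_div_mem_inter h2 (Or.inr rfl) hx]
  constructor
  · have hbdd : Bornology.IsBounded (K₁ ∩ K₂) :=
      (Metric.isBounded_Icc 0 1).subset (inter_subset_left.trans h1.subset_Icc)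
    refine (((countable_singleton p).union (countable_iUnion fun k =>
      (countable_range fun m : ℤ => (m : ℝ) / n).image φ^[k]))).mono ?_
    refine (subset_iInter_image_iterate_union_iUnion
      (h1.inter_subset_image_union_range h2 hD.subset)).trans ?_
    exact union_subset_union_left _ (iInter_image_iterate_subset_singleton hφ hc hbdd)
  · have hmaps : MapsTo φ (K₁ ∩ K₂) (K₁ ∩ K₂) := fun y hy =>
      ⟨h1.div_mem hd₀D.1 hy.1, h2.div_mem hd₀D.2 hy.2⟩
    exact infinite_of_injective_forall_mem
      (injective_iterate_apply hφ (by positivity) hc.ne (int_div_ne_div_sub_one hm0 hmn d₀))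
      fun k => hmaps.iterate k hm
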